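/- arXiv:1910.05966 — 4 statements merged into one kernel-verified Lean document; each statement's English description precedes it below -/
import Mathlib

section
/- Let G be a connected d-regular graph on n vertices with normalized adjacency operator A and smallest eigenvalue λ_n. If S ⊆ V is an independent set with |S|/n = (−λ_n)/(1 − λ_n) (the Hoffman bound is attained), then the characteristic function 1_S is a linear combination of the constant function and a single eigenfunction of A with eigenvalue λ_n. -/
/-!
Put `α = |S| / n` and `x = 1_S - α 1`. Since `S` is independent and `G` is regular, the
quadratic forms are explicit: `⟪x, A x⟫ = -α² n` and `⟪x, x⟫ = α (1 - α) n`. The sharpness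
condition `α (1 - λ_n) = -λ_n` says exactly that `⟪x, (A - λ_n) x⟫ = 0`. As `λ_n` is the least
eigenvalue, `A - λ_n` is positive semidefinite, so it kills `x`: `x` is a `λ_n`-eigenfunction
(nonzero unless `S` is empty or everything), and `1_S = α 1 + x`.
-/

open Matrix Finset

namespace Matrix

variable {n : Type*} [Fintype n] [DecidableEq n] {A : Matrix n n ℝ} {lam : ℝ}

theorem IsSymm.posSemidef_sub_smul_one (hA : A.IsSymm)
    (hmin : ∀ μ : ℝ, (∃ f : n → ℝ, f ≠ 0 ∧ A *ᵥ f = μ • f) → lam ≤ μ) :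
    (A - lam • 1).PosSemidef := by
  have hM : (A - lam • 1).IsHermitian :=
    isHermitian_iff_isSymm.mpr (hA.sub (isSymm_one.smul lam))
  refine hM.posSemidef_iff_eigenvalues_nonneg.mpr fun i => ?_
  have hv : ⇑(hM.eigenvectorBasis i) ≠ 0 := fun h =>
    hM.eigenvectorBasis.orthonormal.ne_zero i (by ext j; exact congrFun h j)
  have hAv := hM.mulVec_eigenvectorBasis i
  rw [sub_mulVec, smul_mulVec, one_mulVec, sub_eq_iff_eq_add, ← add_smul] at hAv
  simpa using hmin _ ⟨_, hv, hAv⟩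

theorem IsSymm.mulVec_eq_smul_of_dotProduct_mulVec_eq (hA : A.IsSymm)
    (hmin : ∀ μ : ℝ, (∃ f : n → ℝ, f ≠ 0 ∧ A *ᵥ f = μ • f) → lam ≤ μ) {x : n → ℝ}
    (hx : x ⬝ᵥ (A *ᵥ x) = lam * (x ⬝ᵥ x)) : A *ᵥ x = lam • x := by
  have hquad : star x ⬝ᵥ ((A - lam • 1) *ᵥ x) = 0 := by
    rw [star_trivial, sub_mulVec, smul_mulVec, one_mulVec, dotProduct_sub, dotProduct_smul, hx,
      smul_eq_mul, sub_self]
  have hker := ((hA.posSemidef_sub_smul_one hmin).dotProduct_mulVec_zero_iff x).mp hquad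
  rwa [sub_mulVec, smul_mulVec, one_mulVec, sub_eq_zero] at hker

end Matrix

namespace Finset

variable {V : Type*} [Fintype V] [DecidableEq V] (S : Finset V)

def indicatorVec : V → ℝ := fun v => if v ∈ S then 1 else 0

theorem indicatorVec_dotProduct_one : S.indicatorVec ⬝ᵥ 1 = #S := by
  simp [indicatorVec, dotProduct_one]

theorem one_dotProduct_indicatorVec : 1 ⬝ᵥ S.indicatorVec = #S := by
  simp [indicatorVec, one_dotProduct]

theorem indicatorVec_dotProduct_self : S.indicatorVec ⬝ᵥ S.indicatorVec = #S := by
  simp [indicatorVec, dotProduct]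

theorem dotProduct_self_indicatorVec_sub_smul_one (c : ℝ) :
    (S.indicatorVec - c • 1) ⬝ᵥ (S.indicatorVec - c • 1) =
      #S - 2 * c * #S + c ^ 2 * Fintype.card V := by
  simp only [sub_dotProduct, dotProduct_sub, smul_dotProduct, dotProduct_smul,
    indicatorVec_dotProduct_self, indicatorVec_dotProduct_one, one_dotProduct_indicatorVec,
    one_dotProduct_one, smul_eq_mul]
  ring

end Finset

namespace SimpleGraph

variable {V : Type*} [Fintype V] {G : SimpleGraph V} [DecidableRel G.Adj] {d : ℕ}

theorem IsRegularOfDegree.adjMatrix_mulVec_one (hreg : G.IsRegularOfDegree d) :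
    G.adjMatrix ℝ *ᵥ 1 = (d : ℝ) • 1 := by
  ext v
  simp [hreg v]

theorem IsRegularOfDegree.pos_of_preconnected [Nontrivial V] (hreg : G.IsRegularOfDegree d)
    (hconn : G.Preconnected) : 0 < d := by
  obtain ⟨v⟩ := ‹Nontrivial V›.to_nonempty
  exact hreg v ▸ hconn.degree_pos_of_nontrivial v

variable [DecidableEq V] {S : Finset V}

theorem IsIndepSet.adjMatrix_mulVec_indicatorVec_apply (hS : G.IsIndepSet S) {v : V}
    (hv : v ∈ S) : (G.adjMatrix ℝ *ᵥ S.indicatorVec) v = 0 := by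
  rw [adjMatrix_mulVec_apply]
  refine sum_eq_zero fun u hu => if_neg fun huS => ?_
  rw [mem_neighborFinset] at hu
  exact hS hv huS hu.ne hu

theorem IsIndepSet.indicatorVec_dotProduct_adjMatrix_mulVec (hS : G.IsIndepSet S) :
    S.indicatorVec ⬝ᵥ (G.adjMatrix ℝ *ᵥ S.indicatorVec) = 0 := by
  refine sum_eq_zero fun v _ => ?_
  by_cases hv : v ∈ S
  · rw [hS.adjMatrix_mulVec_indicatorVec_apply hv, mul_zero]
  · simp [indicatorVec, hv]

theorem IsRegularOfDegree.dotProduct_adjMatrix_mulVec_indicatorVec_sub_smul_one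
    (hreg : G.IsRegularOfDegree d) (hS : G.IsIndepSet S) (c : ℝ) :
    (S.indicatorVec - c • 1) ⬝ᵥ (G.adjMatrix ℝ *ᵥ (S.indicatorVec - c • 1)) =
      d * (c ^ 2 * Fintype.card V - 2 * c * #S) := by
  have hsymm : 1 ⬝ᵥ (G.adjMatrix ℝ *ᵥ S.indicatorVec) =
      S.indicatorVec ⬝ᵥ (G.adjMatrix ℝ *ᵥ 1) := by
    rw [dotProduct_mulVec, ← mulVec_transpose, transpose_adjMatrix, dotProduct_comm]
  simp only [mulVec_sub, mulVec_smul, sub_dotProduct, dotProduct_sub, smul_dotProduct,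
    dotProduct_smul, hsymm, hS.indicatorVec_dotProduct_adjMatrix_mulVec,
    hreg.adjMatrix_mulVec_one, indicatorVec_dotProduct_one, one_dotProduct_one, smul_eq_mul]
  ring

theorem IsRegularOfDegree.dotProduct_mulVec_indicatorVec_sub_smul_one_of_hoffman_eq
    (hreg : G.IsRegularOfDegree d) (hd : (d : ℝ) ≠ 0) (hS : G.IsIndepSet S) {α lam : ℝ}
    (hα : α * Fintype.card V = #S) (hsharp : α * (1 - lam) = -lam) :
    (S.indicatorVec - α • 1) ⬝ᵥ (((d : ℝ)⁻¹ • G.adjMatrix ℝ) *ᵥ (S.indicatorVec - α • 1)) =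
      lam * ((S.indicatorVec - α • 1) ⬝ᵥ (S.indicatorVec - α • 1)) := by
  rw [smul_mulVec, dotProduct_smul, hreg.dotProduct_adjMatrix_mulVec_indicatorVec_sub_smul_one hS,
    dotProduct_self_indicatorVec_sub_smul_one, smul_eq_mul, inv_mul_cancel_left₀ hd]
  linear_combination (α - lam * α) * hα - #S * hsharp

end SimpleGraph

/-- If the Hoffman bound is attained by an independent set `S`, then `1_S` is a linear
combination of the constant function and a single eigenfunction with eigenvalue `lam`. -/
theorem hoffman_sharp_extremal_design {V : Type*} [Fintype V] [DecidableEq V]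
    (G : SimpleGraph V) [DecidableRel G.Adj] (d : ℕ)
    (hreg : G.IsRegularOfDegree d) (hconn : G.Connected)
    (A : Matrix V V ℝ) (hA : A = (d : ℝ)⁻¹ • G.adjMatrix ℝ)
    (lam : ℝ)
    (hEig : ∃ f : V → ℝ, f ≠ 0 ∧ A.mulVec f = lam • f)
    (hMin : ∀ μ : ℝ, (∃ f : V → ℝ, f ≠ 0 ∧ A.mulVec f = μ • f) → lam ≤ μ)
    (S : Finset V) (hS : ∀ u ∈ S, ∀ v ∈ S, ¬ G.Adj u v)
    (hSharp : (S.card : ℝ) / (Fintype.card V : ℝ) = (-lam) / (1 - lam)) :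
    ∃ (c₁ c₂ : ℝ) (f : V → ℝ), f ≠ 0 ∧ A.mulVec f = lam • f ∧
      ∀ v, (if v ∈ S then (1 : ℝ) else 0) = c₁ + c₂ * f v := by
  obtain ⟨f, hf, hAf⟩ := hEig
  by_cases hS_empty : S = ∅
  · exact ⟨0, 0, f, hf, hAf, by simp [hS_empty]⟩
  by_cases hS_univ : S = univ
  · exact ⟨1, 0, f, hf, hAf, by simp [hS_univ]⟩
  obtain ⟨u, hu⟩ := nonempty_iff_ne_empty.mpr hS_empty
  obtain ⟨w, hw⟩ : ∃ w, w ∉ S := by simpa [eq_univ_iff_forall] using hS_univ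
  have : Nontrivial V := ⟨⟨u, w, ne_of_mem_of_not_mem hu hw⟩⟩
  have hd : (d : ℝ) ≠ 0 := by exact_mod_cast (hreg.pos_of_preconnected hconn.preconnected).ne'
  set α : ℝ := #S / Fintype.card V
  have hα : 0 < α := by
    have := card_pos.mpr ⟨u, hu⟩
    positivity
  have hlam : 1 - lam ≠ 0 := by
    intro h
    rw [h, div_zero] at hSharp
    exact hα.ne' hSharp
  refine ⟨α, 1, S.indicatorVec - α • 1, ?_, ?_, fun v => by simp [indicatorVec]⟩
  · exact fun h => hα.ne' (by simpa [indicatorVec, hw] using congrFun h w)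
  · have hA_symm : A.IsSymm := hA ▸ G.isSymm_adjMatrix.smul _
    refine hA_symm.mulVec_eq_smul_of_dotProduct_mulVec_eq hMin ?_
    rw [hA]
    exact hreg.dotProduct_mulVec_indicatorVec_sub_smul_one_of_hoffman_eq hd
      (fun u hu v hv _ => hS u hu v hv)
      (div_mul_cancel₀ _ (Nat.cast_ne_zero.mpr Fintype.card_ne_zero))
      (by rw [hSharp, div_mul_cancel₀ _ hlam])
end

section
/- Let G be a connected d-regular graph on n vertices with second largest normalized adjacency eigenvalue λ_2. If S ⊊ V is a nonempty proper subset satisfying n·|E(S, V∖S)|/(d·|S|·|V∖S|) = 1 − λ_2, then the characteristic function 1_S is a linear combination of the constant function and a single eigenfunction of the normalized adjacency operator with eigenvalue λ_2. -/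
/-!
Let `F = 1_S - (|S|/n) 1`. Then `F` is orthogonal to the constants, `‖F‖² = |S| |V∖S| / n`, and
the Laplacian quadratic form of `F` counts the edges leaving `S`; so the sharpness hypothesis says
that the Rayleigh quotient `⟨F, A F⟩ / ⟨F, F⟩` equals `λ₂`. In an orthonormal eigenbasis of `A`,
the eigenvalue-`1` eigenvectors are constant (the graph is connected), hence orthogonal to `F`, and
every other eigenvalue is at most `λ₂`. Equality in the Rayleigh quotient then forces all of `F` to
lie in the `λ₂`-eigenspace, and `1_S = |S|/n + F`.
-/

open Matrix Finset

namespace OrthonormalBasis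

variable {ι n : Type*} [Fintype ι] [Fintype n]

theorem sum_dotProduct_mul_dotProduct (b : OrthonormalBasis ι ℝ (EuclideanSpace ℝ n))
    (x y : n → ℝ) : ∑ i, (⇑(b i) ⬝ᵥ x) * (⇑(b i) ⬝ᵥ y) = x ⬝ᵥ y := by
  have := b.sum_inner_mul_inner (WithLp.toLp 2 x) (WithLp.toLp 2 y)
  simp only [real_inner_comm _ (WithLp.toLp 2 x), EuclideanSpace.inner_eq_star_dotProduct,
    star_trivial] at this
  simpa [dotProduct_comm] using this

end OrthonormalBasis

namespace Matrix.IsHermitian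

variable {n : Type*} [Fintype n] [DecidableEq n] {A : Matrix n n ℝ}

theorem eigenvectorBasis_dotProduct_mulVec (hA : A.IsHermitian) (i : n) (x : n → ℝ) :
    ⇑(hA.eigenvectorBasis i) ⬝ᵥ (A *ᵥ x) = hA.eigenvalues i * (⇑(hA.eigenvectorBasis i) ⬝ᵥ x) := by
  have hsymm : Aᵀ = A := by rwa [IsHermitian, conjTranspose_eq_transpose_of_trivial] at hA
  rw [dotProduct_mulVec, ← mulVec_transpose, hsymm, hA.mulVec_eigenvectorBasis, smul_dotProduct,
    smul_eq_mul]

theorem mulVec_eq_smul_of_rayleigh_eq (hA : A.IsHermitian) {lam : ℝ} {f : n → ℝ}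
    (heig : ∀ (μ : ℝ) (g : n → ℝ), g ≠ 0 → A *ᵥ g = μ • g → μ ≤ lam ∨ g ⬝ᵥ f = 0)
    (hray : f ⬝ᵥ (A *ᵥ f) = lam * (f ⬝ᵥ f)) :
    A *ᵥ f = lam • f := by
  have hterm_nonneg : ∀ i, 0 ≤ (lam - hA.eigenvalues i) *
      ((⇑(hA.eigenvectorBasis i) ⬝ᵥ f) * (⇑(hA.eigenvectorBasis i) ⬝ᵥ f)) := by
    intro i
    have hb : (⇑(hA.eigenvectorBasis i) : n → ℝ) ≠ 0 := fun h =>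
      hA.eigenvectorBasis.orthonormal.ne_zero i (by ext v; exact congrFun h v)
    rcases heig _ _ hb (hA.mulVec_eigenvectorBasis i) with hle | horth
    · exact mul_nonneg (sub_nonneg.2 hle) (mul_self_nonneg _)
    · simp [horth]
  -- Parseval turns the Rayleigh equation into `∑ (lam - μᵢ) cᵢ² = 0`.
  have hsum : ∑ i, (lam - hA.eigenvalues i) *
      ((⇑(hA.eigenvectorBasis i) ⬝ᵥ f) * (⇑(hA.eigenvectorBasis i) ⬝ᵥ f)) = 0 := by
    have hAf := hA.eigenvectorBasis.sum_dotProduct_mul_dotProduct f (A *ᵥ f)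
    have hff := hA.eigenvectorBasis.sum_dotProduct_mul_dotProduct f f
    simp only [hA.eigenvectorBasis_dotProduct_mulVec] at hAf
    have hzero : lam * (f ⬝ᵥ f) - f ⬝ᵥ (A *ᵥ f) = 0 := by rw [hray, sub_self]
    rw [← hff, ← hAf, mul_sum, ← sum_sub_distrib] at hzero
    rw [← hzero]
    exact sum_congr rfl fun i _ => by ring
  have hcoef : ∀ i, ⇑(hA.eigenvectorBasis i) ⬝ᵥ (A *ᵥ f - lam • f) = 0 := by
    intro i
    have := (sum_eq_zero_iff_of_nonneg fun i _ => hterm_nonneg i).1 hsum i (mem_univ i)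
    rw [dotProduct_sub, hA.eigenvectorBasis_dotProduct_mulVec, dotProduct_smul, smul_eq_mul,
      ← sub_mul]
    rcases mul_eq_zero.1 this with h | h
    · simp [← sub_eq_zero.1 h]
    · simp [mul_self_eq_zero.1 h]
  rw [← sub_eq_zero, ← dotProduct_self_eq_zero, ← hA.eigenvectorBasis.sum_dotProduct_mul_dotProduct]
  simp [hcoef]

end Matrix.IsHermitian

section CenteredIndicator

variable {V : Type*} [Fintype V] [DecidableEq V]

noncomputable def centeredIndicator (S : Finset V) (v : V) : ℝ :=
  (if v ∈ S then 1 else 0) - #S / Fintype.card V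

variable [Nonempty V] (S : Finset V)

theorem sum_centeredIndicator : ∑ v, centeredIndicator S v = 0 := by
  have hn : (Fintype.card V : ℝ) ≠ 0 := Nat.cast_ne_zero.2 Fintype.card_ne_zero
  simp only [centeredIndicator, sum_sub_distrib, sum_boole, filter_mem_eq_inter, univ_inter,
    sum_const, card_univ, nsmul_eq_mul]
  field_simp
  ring

theorem centeredIndicator_dotProduct_self :
    centeredIndicator S ⬝ᵥ centeredIndicator S = #S * #Sᶜ / Fintype.card V := by
  have hn : (Fintype.card V : ℝ) ≠ 0 := Nat.cast_ne_zero.2 Fintype.card_ne_zero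
  have hsq : ∀ v, centeredIndicator S v * centeredIndicator S v =
      (1 - 2 * (#S / Fintype.card V)) * (if v ∈ S then 1 else 0) + (#S / Fintype.card V) ^ 2 := by
    intro v
    by_cases hv : v ∈ S <;> simp [centeredIndicator, hv] <;> ring
  simp only [dotProduct, hsq, sum_add_distrib, ← mul_sum, sum_boole, filter_mem_eq_inter,
    univ_inter, sum_const, card_univ, nsmul_eq_mul, card_compl, Nat.cast_sub (card_le_univ S)]
  field_simp
  ring

end CenteredIndicator

namespace SimpleGraph

variable {V : Type*} [Fintype V] [DecidableEq V] (G : SimpleGraph V) [DecidableRel G.Adj]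

theorem dotProduct_lapMatrix_mulVec_sub_const {R : Type*} [Field R] [CharZero R]
    (x : V → R) (c : R) :
    (fun v => x v - c) ⬝ᵥ (G.lapMatrix R *ᵥ fun v => x v - c) = x ⬝ᵥ (G.lapMatrix R *ᵥ x) := by
  simp only [← toLinearMap₂'_apply', lapMatrix_toLinearMap₂', sub_sub_sub_cancel_right]

theorem indicator_dotProduct_lapMatrix_mulVec {R : Type*} [CommRing R] (S : Finset V) :
    (fun v => if v ∈ S then (1 : R) else 0) ⬝ᵥ
        (G.lapMatrix R *ᵥ fun v => if v ∈ S then (1 : R) else 0) =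
      #{p ∈ S ×ˢ Sᶜ | G.Adj p.1 p.2} := by
  rw [card_filter, sum_product]
  push_cast
  simp only [dotProduct, ite_mul, one_mul, zero_mul, sum_ite_mem, univ_inter]
  refine sum_congr rfl fun u hu => ?_
  rw [lapMatrix_mulVec_apply, if_pos hu, mul_one]
  have hsplit := card_filter_add_card_filter_not (s := G.neighborFinset u) (· ∈ S)
  have hcut : {w ∈ G.neighborFinset u | w ∉ S} = {w ∈ Sᶜ | G.Adj u w} := by
    ext w; simp [and_comm]
  rw [sub_eq_iff_eq_add, sum_boole, sum_boole, ← hcut, degree, ← hsplit]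
  push_cast
  ring

theorem centeredIndicator_dotProduct_lapMatrix_mulVec (S : Finset V) :
    centeredIndicator S ⬝ᵥ (G.lapMatrix ℝ *ᵥ centeredIndicator S) =
      #{p ∈ S ×ˢ Sᶜ | G.Adj p.1 p.2} := by
  rw [← G.indicator_dotProduct_lapMatrix_mulVec (R := ℝ),
    ← G.dotProduct_lapMatrix_mulVec_sub_const (fun v => if v ∈ S then 1 else 0)
      (#S / Fintype.card V : ℝ)]
  rfl

variable {G} {d : ℕ}

theorem IsRegularOfDegree.dotProduct_adjMatrix_mulVec (hreg : G.IsRegularOfDegree d)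
    {R : Type*} [CommRing R] (x : V → R) :
    x ⬝ᵥ (G.adjMatrix R *ᵥ x) = d * (x ⬝ᵥ x) - x ⬝ᵥ (G.lapMatrix R *ᵥ x) := by
  have hdeg : x ⬝ᵥ (G.degMatrix R *ᵥ x) = d * (x ⬝ᵥ x) := by
    rw [dotProduct_mulVec_degMatrix, dotProduct, mul_sum]
    exact sum_congr rfl fun v _ => by rw [hreg v]; ring
  rw [lapMatrix, sub_mulVec, dotProduct_sub, hdeg, sub_sub_cancel]

theorem IsRegularOfDegree.eq_of_adjMatrix_mulVec_eq_smul (hreg : G.IsRegularOfDegree d)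
    (hconn : G.Connected) {g : V → ℝ} (hg : G.adjMatrix ℝ *ᵥ g = (d : ℝ) • g) (v w : V) :
    g v = g w := by
  have hlap : G.lapMatrix ℝ *ᵥ g = 0 := by
    ext u
    simp [lapMatrix, sub_mulVec, degMatrix_mulVec_apply, hg, hreg u]
  exact (lapMatrix_mulVec_eq_zero_iff_forall_reachable G).1 hlap v w (hconn v w)

theorem IsRegularOfDegree.dotProduct_eq_zero_of_adjMatrix_mulVec_eq_smul
    (hreg : G.IsRegularOfDegree d) (hconn : G.Connected) {g f : V → ℝ}
    (hg : G.adjMatrix ℝ *ᵥ g = (d : ℝ) • g) (hf : ∑ v, f v = 0) : g ⬝ᵥ f = 0 := by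
  obtain ⟨v₀⟩ := hconn.nonempty
  simp [dotProduct, hreg.eq_of_adjMatrix_mulVec_eq_smul hconn hg _ v₀, ← mul_sum, hf]

end SimpleGraph

theorem cheeger_sharp_extremal_design_general {V : Type*} [Fintype V] [DecidableEq V]
    (G : SimpleGraph V) [DecidableRel G.Adj] (d : ℕ)
    (hreg : G.IsRegularOfDegree d) (hconn : G.Connected)
    (A : Matrix V V ℝ) (hA : A = (d : ℝ)⁻¹ • G.adjMatrix ℝ)
    (lam2 : ℝ) (hlt : lam2 < 1)
    (hSecond : ∀ μ : ℝ, (∃ f : V → ℝ, f ≠ 0 ∧ A.mulVec f = μ • f) → μ = 1 ∨ μ ≤ lam2)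
    (S : Finset V)
    (hSharp : ((Fintype.card V : ℝ) *
        (((S ×ˢ Sᶜ).filter fun p => G.Adj p.1 p.2).card : ℝ)) /
        ((d : ℝ) * (S.card : ℝ) * (Sᶜ.card : ℝ)) = 1 - lam2) :
    ∃ (c₁ c₂ : ℝ) (f : V → ℝ), f ≠ 0 ∧ A.mulVec f = lam2 • f ∧
      ∀ v, (if v ∈ S then (1 : ℝ) else 0) = c₁ + c₂ * f v := by
  -- The quotient equals `1 - lam2 ≠ 0`, so its denominator cannot vanish.
  have hden : (d : ℝ) * #S * #Sᶜ ≠ 0 := fun h => by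
    rw [h, div_zero] at hSharp
    linarith
  obtain ⟨⟨hd, hS⟩, hSc⟩ : ((d : ℝ) ≠ 0 ∧ (#S : ℝ) ≠ 0) ∧ (#Sᶜ : ℝ) ≠ 0 := by
    simpa only [mul_ne_zero_iff] using hden
  have := hconn.nonempty
  have hFF := centeredIndicator_dotProduct_self S
  have hlam : lam2 = 1 - Fintype.card V * #{p ∈ S ×ˢ Sᶜ | G.Adj p.1 p.2} / (d * #S * #Sᶜ) := by
    linarith
  have hray : centeredIndicator S ⬝ᵥ (A *ᵥ centeredIndicator S) =
      lam2 * (centeredIndicator S ⬝ᵥ centeredIndicator S) := by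
    rw [hA, smul_mulVec, dotProduct_smul, smul_eq_mul, hreg.dotProduct_adjMatrix_mulVec,
      G.centeredIndicator_dotProduct_lapMatrix_mulVec, hFF, hlam]
    field_simp
  have hA_herm : A.IsHermitian := hA ▸ (G.isHermitian_adjMatrix ℝ).smul (IsSelfAdjoint.all _)
  have hF : A *ᵥ centeredIndicator S = lam2 • centeredIndicator S := by
    refine hA_herm.mulVec_eq_smul_of_rayleigh_eq (fun μ g hg hAg => ?_) hray
    rcases hSecond μ ⟨g, hg, hAg⟩ with rfl | hle
    · rw [hA, smul_mulVec, one_smul, inv_smul_eq_iff₀ hd] at hAg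
      exact Or.inr (hreg.dotProduct_eq_zero_of_adjMatrix_mulVec_eq_smul hconn hAg
        (sum_centeredIndicator S))
    · exact Or.inl hle
  refine ⟨#S / Fintype.card V, 1, centeredIndicator S, fun h0 => ?_, hF,
    fun v => by simp [centeredIndicator]⟩
  rw [h0, zero_dotProduct] at hFF
  exact div_ne_zero (mul_ne_zero hS hSc) (Nat.cast_ne_zero.2 Fintype.card_ne_zero) hFF.symm

/-- If a nonempty proper subset `S` attains the Cheeger bound, then `1_S` is a linear
combination of the constant function and a single eigenfunction with eigenvalue `lam2`. -/
theorem cheeger_sharp_extremal_design {V : Type*} [Fintype V] [DecidableEq V]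
    (G : SimpleGraph V) [DecidableRel G.Adj] (d : ℕ)
    (hreg : G.IsRegularOfDegree d) (hconn : G.Connected)
    (A : Matrix V V ℝ) (hA : A = (d : ℝ)⁻¹ • G.adjMatrix ℝ)
    (lam2 : ℝ) (hlt : lam2 < 1)
    (hEig : ∃ f : V → ℝ, f ≠ 0 ∧ A.mulVec f = lam2 • f)
    (hSecond : ∀ μ : ℝ, (∃ f : V → ℝ, f ≠ 0 ∧ A.mulVec f = μ • f) → μ = 1 ∨ μ ≤ lam2)
    (S : Finset V) (hne : S.Nonempty) (hproper : S ≠ univ)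
    (hSharp : ((Fintype.card V : ℝ) *
        (((S ×ˢ Sᶜ).filter fun p => G.Adj p.1 p.2).card : ℝ)) /
        ((d : ℝ) * (S.card : ℝ) * (Sᶜ.card : ℝ)) = 1 - lam2) :
    ∃ (c₁ c₂ : ℝ) (f : V → ℝ), f ≠ 0 ∧ A.mulVec f = lam2 • f ∧
      ∀ v, (if v ∈ S then (1 : ℝ) else 0) = c₁ + c₂ * f v :=
  cheeger_sharp_extremal_design_general G d hreg hconn A hA lam2 hlt hSecond S hSharp
end

section
/- Let I ⊊ [n] be a nonempty proper subset and set S_I = {J ⊆ [n] : |I ∩ J| is odd}. Then the indicator function 1_{S_I} equals (1/2)(1_V − χ_I), where χ_I(J) = (−1)^{|I∩J|} is an eigenfunction of the normalized adjacency operator of the hypercube Q_n with eigenvalue 1 − 2|I|/n. In particular S_I is a graphical design of order 1 (an extremal graphical design). -/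
open Matrix Finset

def hypercube (n : ℕ) : SimpleGraph (Finset (Fin n)) where
  Adj J K := (symmDiff J K).card = 1
  symm := by
    constructor
    intro J K h
    rwa [symmDiff_comm]
  loopless := by
    constructor
    intro J h
    rw [symmDiff_self] at h
    simp at h

instance hypercube.instDecidableRelAdj (n : ℕ) : DecidableRel (hypercube n).Adj :=
  fun J K => inferInstanceAs (Decidable ((symmDiff J K).card = 1))

/-- The Walsh character `χ_I(J) = (-1)^{|I ∩ J|}`. -/
def walshChar {n : ℕ} (I : Finset (Fin n)) : Finset (Fin n) → ℝ :=
  fun J => (-1 : ℝ) ^ (I ∩ J).card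

/-!
`χ_I` is a character of the group `(Finset (Fin n), ∆) ≅ (ℤ/2)ⁿ`, and the neighbours of `J` in
`Q_n` are the `J ∆ {i}`. Flipping coordinate `i` multiplies `χ_I` by `-1` exactly when `i ∈ I`,
so the adjacency matrix acts on `χ_I` by `(n - |I|) - |I|`. The indicator of `S_I`
is nonconstant since `∅ ∉ S_I` while `{i} ∈ S_I` for `i ∈ I`.
-/

open scoped symmDiff

theorem Finset.card_symmDiff_add_two_mul_card_inter {α : Type*} [DecidableEq α] (s t : Finset α) :
    #(s ∆ t) + 2 * #(s ∩ t) = #s + #t := by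
  rw [symmDiff_eq_sup_sdiff_inf, sup_eq_union, inf_eq_inter,
    card_sdiff_of_subset inter_subset_union, ← card_union_add_card_inter]
  have := card_le_card (inter_subset_union (s := s) (t := t))
  omega

theorem neg_one_pow_card_symmDiff {R α : Type*} [Monoid R] [HasDistribNeg R] [DecidableEq α]
    (s t : Finset α) : (-1 : R) ^ #(s ∆ t) = (-1) ^ #s * (-1) ^ #t := by
  rw [← pow_add, ← card_symmDiff_add_two_mul_card_inter, pow_add, pow_mul, neg_one_sq, one_pow,
    mul_one]

namespace walshChar

variable {n : ℕ} (I : Finset (Fin n))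

theorem apply_symmDiff (J K : Finset (Fin n)) :
    walshChar I (J ∆ K) = walshChar I J * walshChar I K := by
  simp only [walshChar, ← inf_eq_inter, inf_symmDiff_distrib_left, neg_one_pow_card_symmDiff]

@[simp]
theorem apply_empty : walshChar I ∅ = 1 := by
  simp [walshChar]

theorem apply_singleton (i : Fin n) : walshChar I {i} = if i ∈ I then -1 else 1 := by
  by_cases hi : i ∈ I <;> simp [walshChar, hi]

theorem sum_apply_singleton : ∑ i, walshChar I {i} = n - 2 * #I := by
  have hsplit : ∀ i, walshChar I {i} = 1 - 2 * if i ∈ I then 1 else 0 := fun i => by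
    rw [apply_singleton]; split_ifs <;> norm_num
  simp only [hsplit, sum_sub_distrib, ← mul_sum, sum_ite_mem, univ_inter, sum_const, card_univ,
    Fintype.card_fin, nsmul_eq_mul, mul_one]

theorem indicator_odd_eq (J : Finset (Fin n)) :
    (if Odd #(I ∩ J) then (1 : ℝ) else 0) = 1 / 2 * (1 - walshChar I J) := by
  rcases Nat.even_or_odd #(I ∩ J) with h | h
  · rw [if_neg (Nat.not_odd_iff_even.mpr h), walshChar, h.neg_one_pow]; norm_num
  · rw [if_pos h, walshChar, h.neg_one_pow]; norm_num

end walshChar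

theorem hypercube_adj_iff_exists_symmDiff_singleton {n : ℕ} {J K : Finset (Fin n)} :
    (hypercube n).Adj J K ↔ ∃ i, K = J ∆ {i} := by
  change #(J ∆ K) = 1 ↔ _
  rw [card_eq_one]
  constructor
  · rintro ⟨i, hi⟩
    exact ⟨i, by rw [← hi, symmDiff_symmDiff_cancel_left]⟩
  · rintro ⟨i, rfl⟩
    exact ⟨i, symmDiff_symmDiff_cancel_left J {i}⟩

theorem hypercube_neighborFinset {n : ℕ} (J : Finset (Fin n)) :
    (hypercube n).neighborFinset J = univ.image fun i => J ∆ {i} := by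
  ext K
  simp [hypercube_adj_iff_exists_symmDiff_singleton, eq_comm]

theorem hypercube_adjMatrix_mulVec_apply {R : Type*} [NonAssocSemiring R] {n : ℕ}
    (f : Finset (Fin n) → R) (J : Finset (Fin n)) :
    ((hypercube n).adjMatrix R *ᵥ f) J = ∑ i, f (J ∆ {i}) := by
  rw [SimpleGraph.adjMatrix_mulVec_apply, hypercube_neighborFinset, sum_image]
  intro i _ j _ hij
  exact singleton_injective (symmDiff_right_injective J hij)

theorem hypercube_adjMatrix_mulVec_walshChar {n : ℕ} (I : Finset (Fin n)) :
    (hypercube n).adjMatrix ℝ *ᵥ walshChar I = ((n : ℝ) - 2 * #I) • walshChar I := by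
  ext J
  simp only [hypercube_adjMatrix_mulVec_apply, walshChar.apply_symmDiff, ← mul_sum,
    walshChar.sum_apply_singleton, Pi.smul_apply, smul_eq_mul, mul_comm]

theorem hypercube_odd_intersection_extremal_design_general (n : ℕ) (hn : 0 < n)
    (I : Finset (Fin n)) (hIne : I.Nonempty)
    (A : Matrix (Finset (Fin n)) (Finset (Fin n)) ℝ)
    (hA : A = (n : ℝ)⁻¹ • (hypercube n).adjMatrix ℝ)
    (SI : Finset (Finset (Fin n)))
    (hSI : SI = univ.filter fun J => Odd (I ∩ J).card) :
    (∀ J : Finset (Fin n),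
        (if J ∈ SI then (1 : ℝ) else 0) = (1 / 2) * (1 - walshChar I J)) ∧
    A.mulVec (walshChar I) = (1 - 2 * (I.card : ℝ) / (n : ℝ)) • walshChar I ∧
    ¬ ∃ c : ℝ, ∀ J : Finset (Fin n), (if J ∈ SI then (1 : ℝ) else 0) = c := by
  subst hA hSI
  have hind (J : Finset (Fin n)) :
      (if J ∈ univ.filter fun J => Odd #(I ∩ J) then (1 : ℝ) else 0) =
        1 / 2 * (1 - walshChar I J) := by
    simpa only [mem_filter, mem_univ, true_and] using walshChar.indicator_odd_eq I J
  refine ⟨hind, ?_, ?_⟩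
  · have hn' : (n : ℝ) ≠ 0 := by positivity
    rw [smul_mulVec, hypercube_adjMatrix_mulVec_walshChar, smul_smul]
    congr 1
    field_simp
  · rintro ⟨c, hc⟩
    obtain ⟨i, hi⟩ := hIne
    have hconst := (hc ∅).trans (hc {i}).symm
    rw [hind, hind, walshChar.apply_empty, walshChar.apply_singleton, if_pos hi] at hconst
    norm_num at hconst

/-- For a nonempty proper `I ⊊ [n]`, with `S_I = {J : |I ∩ J| odd}`, the indicator of
`S_I` equals `(1/2)(1 - χ_I)`, where `χ_I` is an eigenfunction of the normalized
adjacency operator with eigenvalue `1 - 2|I|/n`; moreover the indicator is not constant,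
so `S_I` is an extremal graphical design (order exactly `1`). -/
theorem hypercube_odd_intersection_extremal_design (n : ℕ) (hn : 0 < n)
    (I : Finset (Fin n)) (hIne : I.Nonempty) (hIproper : I ≠ univ)
    (A : Matrix (Finset (Fin n)) (Finset (Fin n)) ℝ)
    (hA : A = (n : ℝ)⁻¹ • (hypercube n).adjMatrix ℝ)
    (SI : Finset (Finset (Fin n)))
    (hSI : SI = univ.filter fun J => Odd (I ∩ J).card) :
    (∀ J : Finset (Fin n),
        (if J ∈ SI then (1 : ℝ) else 0) = (1 / 2) * (1 - walshChar I J)) ∧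
    A.mulVec (walshChar I) = (1 - 2 * (I.card : ℝ) / (n : ℝ)) • walshChar I ∧
    ¬ ∃ c : ℝ, ∀ J : Finset (Fin n), (if J ∈ SI then (1 : ℝ) else 0) = c :=
  hypercube_odd_intersection_extremal_design_general n hn I hIne A hA SI hSI
end

section
/- Let G_1, G_2 be finite connected regular graphs and W_1 ⊆ V_1, W_2 ⊆ V_2 graphical designs of orders k_1 and k_2 respectively. Then W_1 × W_2 is a graphical design in the weak product G_1 × G_2 of order at most (k_1+1)(k_2+1) − 1. -/
/-! Adjoin the constant function, an eigenvector of the normalized adjacency operator of a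
regular graph, to the expansion of each `1_{Wᵢ}`. Multiplying the two expansions writes
`1_{W₁ × W₂} = 1_{W₁} ⊗ 1_{W₂}` over the `(k₁ + 1)(k₂ + 1)` products `f ⊗ g`, and these are
eigenvectors of `A₁ ⊗ A₂`, which is the normalized adjacency operator of the weak product. The
term `1 ⊗ 1` becomes the constant, leaving `(k₁ + 1)(k₂ + 1) - 1` eigenfunctions. -/

open Matrix Finset

/-- The weak (tensor) product of two simple graphs. -/
def weakProd {V₁ V₂ : Type*} (G₁ : SimpleGraph V₁) (G₂ : SimpleGraph V₂) :
    SimpleGraph (V₁ × V₂) where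
  Adj p q := G₁.Adj p.1 q.1 ∧ G₂.Adj p.2 q.2
  symm := ⟨fun _ _ h => ⟨G₁.symm.symm _ _ h.1, G₂.symm.symm _ _ h.2⟩⟩
  loopless := ⟨fun p h => G₁.loopless.irrefl p.1 h.1⟩

instance weakProd.instDecidableRelAdj {V₁ V₂ : Type*} (G₁ : SimpleGraph V₁)
    (G₂ : SimpleGraph V₂) [DecidableRel G₁.Adj] [DecidableRel G₂.Adj] :
    DecidableRel (weakProd G₁ G₂).Adj :=
  fun p q => inferInstanceAs (Decidable (G₁.Adj p.1 q.1 ∧ G₂.Adj p.2 q.2))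

/-- `1_W` is a linear combination of the constant function and `k` eigenfunctions of
the operator `A`. A graphical design `W` has order `k` if `k` is minimal with this
property. -/
def IsDesignExpr {V : Type*} [Fintype V] [DecidableEq V] (A : Matrix V V ℝ)
    (W : Finset V) (k : ℕ) : Prop :=
  ∃ (c : ℝ) (f : Fin k → V → ℝ) (a : Fin k → ℝ) (μ : Fin k → ℝ),
    (∀ j, f j ≠ 0 ∧ A.mulVec (f j) = μ j • f j) ∧
    ∀ v, (if v ∈ W then (1 : ℝ) else 0) = c + ∑ j, a j * f j v


open scoped Kronecker

section Kronecker

variable {R l m n p : Type*} [CommSemiring R] [Fintype m] [Fintype p]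

theorem Matrix.kronecker_mulVec_mul (A : Matrix l m R) (B : Matrix n p R) (f : m → R)
    (g : p → R) :
    (A ⊗ₖ B) *ᵥ (fun x => f x.1 * g x.2) = fun x => (A *ᵥ f) x.1 * (B *ᵥ g) x.2 := by
  ext ⟨i, j⟩
  simp only [mulVec, dotProduct, kroneckerMap_apply, Fintype.sum_prod_type, sum_mul_sum]
  exact sum_congr rfl fun _ _ => sum_congr rfl fun _ _ => by ring

theorem Matrix.kronecker_eigenvector [NoZeroDivisors R] {A : Matrix m m R} {B : Matrix p p R}
    {f : m → R} {g : p → R} {μ ν : R} (hf : f ≠ 0 ∧ A *ᵥ f = μ • f)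
    (hg : g ≠ 0 ∧ B *ᵥ g = ν • g) :
    (fun x : m × p => f x.1 * g x.2) ≠ 0 ∧
      (A ⊗ₖ B) *ᵥ (fun x => f x.1 * g x.2) = (μ * ν) • fun x => f x.1 * g x.2 := by
  refine ⟨fun h => ?_, ?_⟩
  · obtain ⟨i, hi⟩ := Function.ne_iff.mp hf.1
    obtain ⟨j, hj⟩ := Function.ne_iff.mp hg.1
    exact mul_ne_zero hi hj (congrFun h (i, j))
  · rw [kronecker_mulVec_mul, hf.2, hg.2]
    ext x
    simp only [Pi.smul_apply, smul_eq_mul]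
    ring

end Kronecker

section Graph

variable {V₁ V₂ : Type*} (G₁ : SimpleGraph V₁) (G₂ : SimpleGraph V₂)
  [DecidableRel G₁.Adj] [DecidableRel G₂.Adj]

theorem weakProd_adjMatrix (R : Type*) [Semiring R] :
    (weakProd G₁ G₂).adjMatrix R = G₁.adjMatrix R ⊗ₖ G₂.adjMatrix R := by
  ext ⟨a, b⟩ ⟨c, d⟩
  rw [SimpleGraph.adjMatrix_apply, Matrix.kroneckerMap_apply, SimpleGraph.adjMatrix_apply,
    SimpleGraph.adjMatrix_apply, ite_zero_mul_ite_zero, mul_one]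
  rfl

theorem weakProd_normalizedAdj {K : Type*} [Field K] (d₁ d₂ : ℕ) :
    ((d₁ * d₂ : ℕ) : K)⁻¹ • (weakProd G₁ G₂).adjMatrix K =
      ((d₁ : K)⁻¹ • G₁.adjMatrix K) ⊗ₖ ((d₂ : K)⁻¹ • G₂.adjMatrix K) := by
  rw [weakProd_adjMatrix, Matrix.smul_kronecker, Matrix.kronecker_smul, smul_smul, Nat.cast_mul,
    mul_inv, mul_comm]

end Graph

theorem SimpleGraph.IsRegularOfDegree.smul_adjMatrix_mulVec_one {R V : Type*} [CommSemiring R]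
    [Fintype V] {G : SimpleGraph V} [DecidableRel G.Adj] {d : ℕ} (hreg : G.IsRegularOfDegree d)
    (c : R) : (c • G.adjMatrix R) *ᵥ (fun _ => 1) = (c * d) • fun _ => 1 := by
  ext v
  simp [Matrix.smul_mulVec, hreg v]

section Expansion

variable {V ι : Type*} [Fintype V] [DecidableEq V] [Fintype ι] {A : Matrix V V ℝ} {W : Finset V}

def IsEigenExpansion (A : Matrix V V ℝ) (W : Finset V) (f : ι → V → ℝ) (a : ι → ℝ) : Prop :=
  (∀ i, ∃ μ : ℝ, f i ≠ 0 ∧ A *ᵥ f i = μ • f i) ∧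
    ∀ v, (if v ∈ W then (1 : ℝ) else 0) = ∑ i, a i * f i v

theorem IsDesignExpr.exists_isEigenExpansion_option [Nonempty V] {k : ℕ} {μ₀ : ℝ}
    (h : IsDesignExpr A W k) (hconst : A *ᵥ (fun _ => 1) = μ₀ • fun _ => 1) :
    ∃ (f : Option (Fin k) → V → ℝ) (a : Option (Fin k) → ℝ),
      f none = (fun _ => 1) ∧ IsEigenExpansion A W f a := by
  obtain ⟨c, f, a, μ, hf, hW⟩ := h
  refine ⟨fun o => o.elim (fun _ => 1) f, fun o => o.elim c a, rfl, ?_, fun v => ?_⟩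
  · rintro (_ | i)
    · exact ⟨μ₀, Function.const_ne_zero.mpr one_ne_zero, hconst⟩
    · exact ⟨μ i, hf i⟩
  · simp [Fintype.sum_option, hW v]

theorem IsEigenExpansion.kronecker {V' ι' : Type*} [Fintype V'] [DecidableEq V'] [Fintype ι']
    {A' : Matrix V' V' ℝ} {W' : Finset V'} {f : ι → V → ℝ} {a : ι → ℝ} {f' : ι' → V' → ℝ}
    {a' : ι' → ℝ} (h : IsEigenExpansion A W f a) (h' : IsEigenExpansion A' W' f' a') :
    IsEigenExpansion (A ⊗ₖ A') (W ×ˢ W') (fun (i : ι × ι') x => f i.1 x.1 * f' i.2 x.2)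
      (fun i : ι × ι' => a i.1 * a' i.2) := by
  refine ⟨fun ⟨i, i'⟩ => ?_, fun ⟨v, v'⟩ => ?_⟩
  · obtain ⟨μ, hμ⟩ := h.1 i
    obtain ⟨μ', hμ'⟩ := h'.1 i'
    exact ⟨μ * μ', Matrix.kronecker_eigenvector hμ hμ'⟩
  · have hprod : (if (v, v') ∈ W ×ˢ W' then (1 : ℝ) else 0) =
        (if v ∈ W then 1 else 0) * (if v' ∈ W' then 1 else 0) := by
      simp only [ite_zero_mul_ite_zero, mul_one, mem_product]
    rw [hprod, h.2 v, h'.2 v', sum_mul_sum, Fintype.sum_prod_type]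
    exact sum_congr rfl fun _ _ => sum_congr rfl fun _ _ => by ring

theorem IsEigenExpansion.isDesignExpr [DecidableEq ι] {f : ι → V → ℝ} {a : ι → ℝ}
    (h : IsEigenExpansion A W f a) (i₀ : ι) (hi₀ : f i₀ = fun _ => 1) :
    IsDesignExpr A W (Fintype.card ι - 1) := by
  choose μ hμ using h.1
  let e : {i // i ≠ i₀} ≃ Fin (Fintype.card ι - 1) := Fintype.equivFinOfCardEq (by simp)
  refine ⟨a i₀, fun j => f (e.symm j), fun j => a (e.symm j), fun j => μ (e.symm j),
    fun j => hμ _, fun v => ?_⟩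
  rw [h.2 v, Fintype.sum_eq_add_sum_subtype_ne _ i₀, hi₀, mul_one,
    e.symm.sum_comp fun i => a i * f i v]

end Expansion

theorem weakProd_design_order_general {V₁ V₂ : Type*} [Fintype V₁] [Fintype V₂]
    [DecidableEq V₁] [DecidableEq V₂]
    (G₁ : SimpleGraph V₁) (G₂ : SimpleGraph V₂)
    [DecidableRel G₁.Adj] [DecidableRel G₂.Adj]
    (hconn₁ : G₁.Connected) (hconn₂ : G₂.Connected)
    (d₁ d₂ : ℕ) (hreg₁ : G₁.IsRegularOfDegree d₁) (hreg₂ : G₂.IsRegularOfDegree d₂)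
    (A₁ : Matrix V₁ V₁ ℝ) (hA₁ : A₁ = (d₁ : ℝ)⁻¹ • G₁.adjMatrix ℝ)
    (A₂ : Matrix V₂ V₂ ℝ) (hA₂ : A₂ = (d₂ : ℝ)⁻¹ • G₂.adjMatrix ℝ)
    (A : Matrix (V₁ × V₂) (V₁ × V₂) ℝ)
    (hA : A = ((d₁ * d₂ : ℕ) : ℝ)⁻¹ • (weakProd G₁ G₂).adjMatrix ℝ)
    (W₁ : Finset V₁) (W₂ : Finset V₂) (k₁ k₂ : ℕ)
    (h₁ : IsDesignExpr A₁ W₁ k₁)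
    (h₂ : IsDesignExpr A₂ W₂ k₂) :
    ∃ m ≤ (k₁ + 1) * (k₂ + 1) - 1, IsDesignExpr A (W₁ ×ˢ W₂) m := by
  have := hconn₁.nonempty
  have := hconn₂.nonempty
  obtain ⟨f₁, a₁, hf₁, he₁⟩ :=
    h₁.exists_isEigenExpansion_option (hA₁ ▸ hreg₁.smul_adjMatrix_mulVec_one _)
  obtain ⟨f₂, a₂, hf₂, he₂⟩ :=
    h₂.exists_isEigenExpansion_option (hA₂ ▸ hreg₂.smul_adjMatrix_mulVec_one _)
  rw [hA, weakProd_normalizedAdj, ← hA₁, ← hA₂]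
  refine ⟨_, le_of_eq ?_, (he₁.kronecker he₂).isDesignExpr (none, none) ?_⟩
  · simp
  · simp [hf₁, hf₂]

/-- If `W₁`, `W₂` are graphical designs of orders `k₁`, `k₂` in the connected regular
graphs `G₁`, `G₂`, then `W₁ × W₂` is a graphical design of order at most
`(k₁+1)(k₂+1) - 1` in the weak product `G₁ × G₂`. -/
theorem weakProd_design_order {V₁ V₂ : Type*} [Fintype V₁] [Fintype V₂]
    [DecidableEq V₁] [DecidableEq V₂]
    (G₁ : SimpleGraph V₁) (G₂ : SimpleGraph V₂)
    [DecidableRel G₁.Adj] [DecidableRel G₂.Adj]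
    (hconn₁ : G₁.Connected) (hconn₂ : G₂.Connected)
    (d₁ d₂ : ℕ) (hreg₁ : G₁.IsRegularOfDegree d₁) (hreg₂ : G₂.IsRegularOfDegree d₂)
    (A₁ : Matrix V₁ V₁ ℝ) (hA₁ : A₁ = (d₁ : ℝ)⁻¹ • G₁.adjMatrix ℝ)
    (A₂ : Matrix V₂ V₂ ℝ) (hA₂ : A₂ = (d₂ : ℝ)⁻¹ • G₂.adjMatrix ℝ)
    (A : Matrix (V₁ × V₂) (V₁ × V₂) ℝ)
    (hA : A = ((d₁ * d₂ : ℕ) : ℝ)⁻¹ • (weakProd G₁ G₂).adjMatrix ℝ)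
    (W₁ : Finset V₁) (W₂ : Finset V₂) (k₁ k₂ : ℕ)
    (h₁ : IsDesignExpr A₁ W₁ k₁) (h₁min : ∀ m < k₁, ¬ IsDesignExpr A₁ W₁ m)
    (h₂ : IsDesignExpr A₂ W₂ k₂) (h₂min : ∀ m < k₂, ¬ IsDesignExpr A₂ W₂ m) :
    ∃ m ≤ (k₁ + 1) * (k₂ + 1) - 1, IsDesignExpr A (W₁ ×ˢ W₂) m :=
  weakProd_design_order_general G₁ G₂ hconn₁ hconn₂ d₁ d₂ hreg₁ hreg₂ A₁ hA₁ A₂ hA₂ A hA W₁ W₂ k₁ k₂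
    h₁ h₂
end
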